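/- Let (g,J) be an 8-dimensional nilpotent Lie algebra with weakly non-nilpotent complex structure admitting a (1,0)-basis with equations dη¹ = 0, dη² = η¹³ + η^{1 3̄}, dη³ = iε η^{1 1̄} + iδ η^{1 2̄} − iδ η^{2 1̄}, dη⁴ = A η¹² + B η^{1 1̄} + η²³ + 2δε η^{1 3̄} + η^{2 3̄}, where ε ∈ {0,1}, δ = ±1, A,B ∈ ℂ (the case ν = 1). Then there is a (1,0)-basis {ω¹,…,ω⁴} in which the structure equations become dω¹ = 0, dω² = ω¹³ + ω^{1 3̄}, dω³ = iε ω^{1 1̄} + iδ ω^{1 2̄} − iδ ω^{2 1̄}, dω⁴ = a ω¹² + B' ω^{1 1̄} + ω²³ + 2δε ω^{1 3̄} + ω^{2 3̄}, with δ = ±1 and (ε, a, B') one of: (i) a = 0, B' ∈ {0,1} and ε = 0; (ii) a = 0, B' ∈ [0,∞) and ε = 1; (iii) a = 1, B' ∈ ℂ with Im B' ≥ 0 and ε = 0; (iv) a ∈ (0,∞), B' ∈ ℂ and ε = 1. -/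

import Mathlib

noncomputable section

open Complex Module
open scoped TensorProduct

namespace Paper

/-- The ascending central series of a real Lie algebra. -/
def ascSeries (g : Type*) [LieRing g] [LieAlgebra ℝ g] : ℕ → Submodule ℝ g
  | 0 => ⊥
  | k + 1 =>
    { carrier := {X : g | ∀ Y : g, ⁅X, Y⁆ ∈ ascSeries g k}
      add_mem' := fun ha hb Y => by
        rw [add_lie]; exact Submodule.add_mem _ (ha Y) (hb Y)
      zero_mem' := fun Y => by rw [zero_lie]; exact Submodule.zero_mem _
      smul_mem' := fun c x hx Y => by rw [smul_lie]; exact Submodule.smul_mem _ c (hx Y) }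

/-- A Lie algebra is nilpotent when its ascending central series reaches the whole algebra. -/
def IsNilpotentLie (g : Type*) [LieRing g] [LieAlgebra ℝ g] : Prop :=
  ∃ s : ℕ, ascSeries g s = ⊤

/-- A (integrable) complex structure on a real Lie algebra. -/
structure ComplexStructure (g : Type*) [LieRing g] [LieAlgebra ℝ g] where
  J : g →ₗ[ℝ] g
  j_sq : ∀ X : g, J (J X) = -X
  integrable : ∀ X Y : g, ⁅X, Y⁆ + J ⁅J X, Y⁆ + J ⁅X, J Y⁆ - ⁅J X, J Y⁆ = 0

namespace ComplexStructure

variable {g g' : Type*} [LieRing g] [LieAlgebra ℝ g] [LieRing g'] [LieAlgebra ℝ g']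

/-- The ascending `J`-compatible series `a_k(J)`. -/
def aSeries (Jc : ComplexStructure g) : ℕ → Submodule ℝ g
  | 0 => ⊥
  | k + 1 =>
    { carrier := {X : g | (∀ Y : g, ⁅X, Y⁆ ∈ aSeries Jc k) ∧ (∀ Y : g, ⁅Jc.J X, Y⁆ ∈ aSeries Jc k)}
      add_mem' := fun ha hb => by
        refine ⟨fun Y => ?_, fun Y => ?_⟩
        · rw [add_lie]; exact Submodule.add_mem _ (ha.1 Y) (hb.1 Y)
        · rw [map_add, add_lie]; exact Submodule.add_mem _ (ha.2 Y) (hb.2 Y)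
      zero_mem' := by
        refine ⟨fun Y => ?_, fun Y => ?_⟩
        · rw [zero_lie]; exact Submodule.zero_mem _
        · rw [map_zero, zero_lie]; exact Submodule.zero_mem _
      smul_mem' := fun c x hx => by
        refine ⟨fun Y => ?_, fun Y => ?_⟩
        · rw [smul_lie]; exact Submodule.smul_mem _ c (hx.1 Y)
        · rw [map_smul, smul_lie]; exact Submodule.smul_mem _ c (hx.2 Y) }

/-- Quasi-nilpotent complex structure: `a₁(J) ≠ 0`. -/
def IsQuasiNilpotent (Jc : ComplexStructure g) : Prop := Jc.aSeries 1 ≠ ⊥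

/-- Strongly non-nilpotent complex structure: `a₁(J) = 0`. -/
def IsSnN (Jc : ComplexStructure g) : Prop := Jc.aSeries 1 = ⊥

/-- Weakly non-nilpotent complex structure: `a₁(J) ≠ 0` and the ascending compatible series
stabilizes strictly below `g`. -/
def IsWnN (Jc : ComplexStructure g) : Prop :=
  Jc.aSeries 1 ≠ ⊥ ∧ ∃ t : ℕ, Jc.aSeries t ≠ ⊤ ∧ ∀ l : ℕ, 1 ≤ l → Jc.aSeries (t + l) = Jc.aSeries t

/-- Non-nilpotent complex structure: the ascending compatible series never reaches `g`. -/
def IsNonNilpotent (Jc : ComplexStructure g) : Prop := ∀ t : ℕ, Jc.aSeries t ≠ ⊤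

/-- Equivalence of complex structures. -/
def Equiv (Jc : ComplexStructure g) (Jc' : ComplexStructure g') : Prop :=
  ∃ f : g ≃ₗ⁅ℝ⁆ g', ∀ X : g, f (Jc.J X) = Jc'.J (f X)

end ComplexStructure


/-- Complex conjugate of a complex-valued form. -/
def cF {M : Type*} (α : M → ℂ) : M → ℂ := fun X => (starRingEnd ℂ) (α X)

/-- Wedge product of two 1-forms, as a 2-form. -/
def w2 {M R : Type*} [CommRing R] (α β : M → R) (X Y : M) : R := α X * β Y - α Y * β X

/-- Wedge product of three 1-forms, as a 3-form. -/
def w3 {M R : Type*} [CommRing R] (α β γ : M → R) (X Y Z : M) : R :=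
  α X * w2 β γ Y Z - α Y * w2 β γ X Z + α Z * w2 β γ X Y

/-- Wedge product of four 1-forms, as a 4-form. -/
def w4 {M R : Type*} [CommRing R] (α β γ η : M → R) (W X Y Z : M) : R :=
  α W * w3 β γ η X Y Z - α X * w3 β γ η W Y Z + α Y * w3 β γ η W X Z - α Z * w3 β γ η W X Y

/-- Chevalley–Eilenberg differential of a 1-form: `dα(X,Y) = -α([X,Y])`. -/
def dd {g R : Type*} [LieRing g] [CommRing R] (α : g → R) (X Y : g) : R := -α ⁅X, Y⁆

variable {g : Type*} [LieRing g] [LieAlgebra ℝ g]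

/-- `ω` is a basis of (1,0)-forms for `(g,J)` (here `dim ℝ g = 8`): each `ω k` is of bidegree
(1,0) for `J`, and the joint map `g → ℂ⁴` is bijective (so that `{ω^k, ω̄^k}` is a basis of the
complexified dual). -/
def Is10Basis (Jc : ComplexStructure g) (ω : Fin 4 → (g →ₗ[ℝ] ℂ)) : Prop :=
  (∀ (k : Fin 4) (X : g), ω k (Jc.J X) = Complex.I * ω k X) ∧
  Function.Bijective (fun (X : g) (k : Fin 4) => ω k X)

/-- The complex structure equations (★):
`dω¹ = 0`, `dω² = ω¹³ + ω^{1 3̄}`, `dω³ = iε ω^{1 1̄} + iδ ω^{1 2̄} − iδ ω^{2 1̄}`,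
`dω⁴ = A ω¹² + B ω^{1 1̄} + ν (ω²³ + 2δε ω^{1 3̄} + ω^{2 3̄})`. -/
def StarEq (ω : Fin 4 → (g →ₗ[ℝ] ℂ)) (ε δ ν : ℝ) (A B : ℂ) : Prop :=
  (∀ X Y : g, dd (⇑(ω 0)) X Y = 0) ∧
  (∀ X Y : g, dd (⇑(ω 1)) X Y = w2 (⇑(ω 0)) (⇑(ω 2)) X Y + w2 (⇑(ω 0)) (cF ⇑(ω 2)) X Y) ∧
  (∀ X Y : g, dd (⇑(ω 2)) X Y
      = Complex.I * (ε : ℂ) * w2 (⇑(ω 0)) (cF ⇑(ω 0)) X Y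
        + Complex.I * (δ : ℂ) * w2 (⇑(ω 0)) (cF ⇑(ω 1)) X Y
        - Complex.I * (δ : ℂ) * w2 (⇑(ω 1)) (cF ⇑(ω 0)) X Y) ∧
  (∀ X Y : g, dd (⇑(ω 3)) X Y
      = A * w2 (⇑(ω 0)) (⇑(ω 1)) X Y + B * w2 (⇑(ω 0)) (cF ⇑(ω 0)) X Y
        + (ν : ℂ) * (w2 (⇑(ω 1)) (⇑(ω 2)) X Y
            + 2 * (δ : ℂ) * (ε : ℂ) * w2 (⇑(ω 0)) (cF ⇑(ω 2)) X Y
            + w2 (⇑(ω 1)) (cF ⇑(ω 2)) X Y))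

/-- The admissible range of the parameters `(ε,δ,ν,a,B)` in Theorem 3.1. -/
def Admissible (ε δ ν a : ℝ) (B : ℂ) : Prop :=
  (ε = 0 ∨ ε = 1) ∧ (δ = 1 ∨ δ = -1) ∧
  ((ν = 0 ∧ a = 0 ∧ B = 0) ∨
   (ν = 0 ∧ a = 0 ∧ B = 1) ∨
   ((ν = 0 ∨ ν = 1) ∧ a = 1 - ν ∧ (∃ b : ℝ, 0 ≤ b ∧ B = (b : ℂ)) ∧
      (ε = 0 → (B = 0 ∨ B = 1))) ∨
   (ν = 1 ∧ 0 < a ∧ (ε = 0 → (a = 1 ∧ 0 ≤ B.im))))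

/-- A pseudo-Kähler structure on `(g,J)`: a closed, `J`-invariant, nondegenerate 2-form. -/
structure PseudoKahlerForm (Jc : ComplexStructure g) where
  F : g →ₗ[ℝ] g →ₗ[ℝ] ℝ
  antisymm : ∀ X Y : g, F X Y = -F Y X
  compat : ∀ X Y : g, F (Jc.J X) (Jc.J Y) = F X Y
  closed : ∀ X Y Z : g, F ⁅X, Y⁆ Z - F ⁅X, Z⁆ Y + F ⁅Y, Z⁆ X = 0
  nondeg : ∀ X : g, (∀ Y : g, F X Y = 0) → X = 0

/-!
The only freedom used is a diagonal rescaling `ω¹ = s η¹, ω² = s u η², ω³ = u η³, ω⁴ = s u² η⁴`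
with `|s| = 1` and `u` real, nonzero, and equal to `1` when `ε = 1`. These conditions keep the
coefficients `1, iε, iδ, 2δε` of the equations (★) in place (`s s̄ = 1`, `εu = ε`), while `(A, B)`
becomes `(uA/s, s u² B)`. Choosing the phase `s` and the scale `u` then normalizes `(A, B)`:
for `ε = 1` only the phase is available, and it makes `A`, or else `B`, real and nonnegative; for
`ε = 0` the scale as well brings `A ≠ 0` to `1` (the sign of `u` then fixes `Im B' ≥ 0`), and
otherwise brings `B` to `0` or `1`.
-/

open ComplexConjugate

def rescale (s : ℂ) (u : ℝ) (η : Fin 4 → (g →ₗ[ℝ] ℂ)) : Fin 4 → (g →ₗ[ℝ] ℂ) :=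
  fun k => ![s, s * u, (u : ℂ), s * u ^ 2] k • η k

lemma Is10Basis.smul {Jc : ComplexStructure g} {η : Fin 4 → (g →ₗ[ℝ] ℂ)}
    (hη : Is10Basis Jc η) (c : Fin 4 → ℂ) (hc : ∀ k, c k ≠ 0) :
    Is10Basis Jc (fun k => c k • η k) := by
  refine ⟨fun k X => ?_, ?_⟩
  · simp only [LinearMap.smul_apply, smul_eq_mul, hη.1 k X]
    ring
  · exact (Equiv.piCongrRight fun k => Equiv.mulLeft₀ (c k) (hc k)).bijective.comp hη.2

lemma Is10Basis.rescale {Jc : ComplexStructure g} {η : Fin 4 → (g →ₗ[ℝ] ℂ)}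
    (hη : Is10Basis Jc η) {s : ℂ} {u : ℝ} (hs : s ≠ 0) (hu : u ≠ 0) :
    Is10Basis Jc (rescale s u η) := by
  have hu' : (u : ℂ) ≠ 0 := ofReal_ne_zero.2 hu
  refine hη.smul _ fun k => ?_
  fin_cases k <;> simp [hs, hu']

lemma StarEq.rescale {η : Fin 4 → (g →ₗ[ℝ] ℂ)} {ε δ ν : ℝ} {A B : ℂ}
    (heq : StarEq η ε δ ν A B) {s A' : ℂ} {u : ℝ} (hs : ‖s‖ = 1) (hu : (ε : ℂ) * u = ε)
    (hA : (u : ℂ) * A = A' * s) :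
    StarEq (rescale s u η) ε δ ν A' (s * u ^ 2 * B) := by
  have hss : s * conj s = 1 := by simp [mul_conj, normSq_eq_norm_sq, hs]
  obtain ⟨h1, h2, h3, h4⟩ := heq
  refine ⟨fun X Y => ?_, fun X Y => ?_, fun X Y => ?_, fun X Y => ?_⟩ <;>
    simp only [Paper.rescale, dd, w2, cF, LinearMap.smul_apply, smul_eq_mul, map_mul, conj_ofReal,
      Matrix.cons_val_zero, Matrix.cons_val_one, Matrix.cons_val_two, Matrix.cons_val_three,
      Matrix.head_cons, Matrix.tail_cons] at h1 h2 h3 h4 ⊢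
  · linear_combination s * h1 X Y
  · linear_combination (s * u) * h2 X Y
  · linear_combination (u : ℂ) * h3 X Y
      - I * (ε * (η 0 X * conj (η 0 Y) - η 0 Y * conj (η 0 X))
        + δ * u * (η 0 X * conj (η 1 Y) - η 0 Y * conj (η 1 X))
        - δ * u * (η 1 X * conj (η 0 Y) - η 1 Y * conj (η 0 X))) * hss
      + I * (η 0 X * conj (η 0 Y) - η 0 Y * conj (η 0 X)) * hu
  · linear_combination (s * u ^ 2) * h4 X Y
      + (s * u) * (η 0 X * η 1 Y - η 0 Y * η 1 X) * hA
      - (s * u ^ 2 * B) * (η 0 X * conj (η 0 Y) - η 0 Y * conj (η 0 X)) * hss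
      + 2 * ν * δ * s * u * (η 0 X * conj (η 2 Y) - η 0 Y * conj (η 2 X)) * hu

/-- The normal forms (i)–(iv) of `(ε, a, B')` for `ν = 1`. -/
def IsReducedNuOne (ε a : ℝ) (B' : ℂ) : Prop :=
  (a = 0 ∧ (B' = 0 ∨ B' = 1) ∧ ε = 0) ∨
  (a = 0 ∧ (∃ b : ℝ, 0 ≤ b ∧ B' = (b : ℂ)) ∧ ε = 1) ∨
  (a = 1 ∧ 0 ≤ B'.im ∧ ε = 0) ∨
  (0 < a ∧ ε = 1)

lemma exists_norm_eq_one_mul_eq_norm (z : ℂ) : ∃ s : ℂ, ‖s‖ = 1 ∧ s * z = ‖z‖ := by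
  refine ⟨exp (-z.arg * I), by simpa using norm_exp_ofReal_mul_I (-z.arg), ?_⟩
  conv_lhs => rw [← norm_mul_exp_arg_mul_I z]
  rw [mul_left_comm, ← exp_add]
  simp

/-- The witness is `u = ‖B‖^{-1/2}` and the phase `s` of `B̄`. -/
lemma exists_unit_scale_mul_eq_one {B : ℂ} (hB : B ≠ 0) :
    ∃ (s : ℂ) (u : ℝ), ‖s‖ = 1 ∧ u ≠ 0 ∧ s * u ^ 2 * B = 1 := by
  obtain ⟨s, hs, hsB⟩ := exists_norm_eq_one_mul_eq_norm B
  have hB' : 0 < ‖B‖ := norm_pos_iff.2 hB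
  refine ⟨s, (√‖B‖)⁻¹, hs, by positivity, ?_⟩
  rw [mul_right_comm, hsB, ← ofReal_pow, inv_pow, Real.sq_sqrt hB'.le, ← ofReal_mul,
    mul_inv_cancel₀ hB'.ne', ofReal_one]

/-- The witness is `u = ±‖A‖⁻¹` and `s = u A`; then `s u² B = u³ A B`, and the sign of `u` makes
its imaginary part nonnegative. -/
lemma exists_unit_scale_of_ne_zero {A : ℂ} (hA : A ≠ 0) (B : ℂ) :
    ∃ (s : ℂ) (u : ℝ), ‖s‖ = 1 ∧ u ≠ 0 ∧ (u : ℂ) * A = s ∧ 0 ≤ (s * u ^ 2 * B).im := by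
  have hA' : 0 < ‖A‖ := norm_pos_iff.2 hA
  obtain ⟨u, hu, hu3⟩ : ∃ u : ℝ, |u| = ‖A‖⁻¹ ∧ 0 ≤ u ^ 3 * (A * B).im := by
    rcases le_total 0 (A * B).im with h | h
    · exact ⟨‖A‖⁻¹, abs_of_pos (by positivity), by positivity⟩
    · refine ⟨-‖A‖⁻¹, by simp, ?_⟩
      rw [neg_pow, Odd.neg_one_pow (by decide), neg_one_mul, neg_mul]
      exact neg_nonneg.2 (mul_nonpos_of_nonneg_of_nonpos (by positivity) h)
  refine ⟨u * A, u, ?_, ?_, rfl, ?_⟩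
  · rw [norm_mul, norm_real, Real.norm_eq_abs, hu, inv_mul_cancel₀ hA'.ne']
  · rintro rfl
    simp only [abs_zero] at hu
    exact (inv_pos.2 hA').ne hu
  · convert hu3 using 1
    rw [show (u : ℂ) * A * u ^ 2 * B = (u ^ 3 : ℝ) * (A * B) by push_cast; ring, im_ofReal_mul]

lemma exists_reducing_params {ε : ℝ} (hε : ε = 0 ∨ ε = 1) (A B : ℂ) :
    ∃ (s : ℂ) (u a : ℝ), ‖s‖ = 1 ∧ u ≠ 0 ∧ (ε : ℂ) * u = ε ∧ (u : ℂ) * A = a * s ∧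
      IsReducedNuOne ε a (s * u ^ 2 * B) := by
  rcases hε with rfl | rfl
  · rcases eq_or_ne A 0 with rfl | hA
    · rcases eq_or_ne B 0 with rfl | hB
      · exact ⟨1, 1, 0, by simp, one_ne_zero, by simp, by simp, Or.inl ⟨rfl, by simp, rfl⟩⟩
      · obtain ⟨s, u, hs, hu, hB'⟩ := exists_unit_scale_mul_eq_one hB
        exact ⟨s, u, 0, hs, hu, by simp, by simp, Or.inl ⟨rfl, Or.inr hB', rfl⟩⟩
    · obtain ⟨s, u, hs, hu, hsA, hB'⟩ := exists_unit_scale_of_ne_zero hA B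
      exact ⟨s, u, 1, hs, hu, by simp, by simp [hsA], Or.inr (Or.inr (Or.inl ⟨rfl, hB', rfl⟩))⟩
  · rcases eq_or_ne A 0 with rfl | hA
    · obtain ⟨s, hs, hsB⟩ := exists_norm_eq_one_mul_eq_norm B
      exact ⟨s, 1, 0, hs, one_ne_zero, by simp, by simp,
        Or.inr (Or.inl ⟨rfl, ⟨‖B‖, norm_nonneg B, by simp [hsB]⟩, rfl⟩)⟩
    · refine ⟨exp (A.arg * I), 1, ‖A‖, norm_exp_ofReal_mul_I A.arg, one_ne_zero, by simp, ?_,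
        Or.inr (Or.inr (Or.inr ⟨norm_pos_iff.2 hA, rfl⟩))⟩
      rw [ofReal_one, one_mul, norm_mul_exp_arg_mul_I]

theorem reduction_nu_one_general
    {g : Type*} [LieRing g] [LieAlgebra ℝ g]
    (Jc : ComplexStructure g)
    (η : Fin 4 → (g →ₗ[ℝ] ℂ)) (ε δ : ℝ) (A B : ℂ)
    (hη : Is10Basis Jc η) (hε : ε = 0 ∨ ε = 1)
    (heq : StarEq η ε δ 1 A B) :
    ∃ (ω : Fin 4 → (g →ₗ[ℝ] ℂ)) (a : ℝ) (B' : ℂ),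
      Is10Basis Jc ω ∧ StarEq ω ε δ 1 (a : ℂ) B' ∧
      ((a = 0 ∧ (B' = 0 ∨ B' = 1) ∧ ε = 0) ∨
       (a = 0 ∧ (∃ b : ℝ, 0 ≤ b ∧ B' = (b : ℂ)) ∧ ε = 1) ∨
       (a = 1 ∧ 0 ≤ B'.im ∧ ε = 0) ∨
       (0 < a ∧ ε = 1)) := by
  obtain ⟨s, u, a, hs, hu, hεu, hA, hred⟩ := exists_reducing_params hε A B
  have hs0 : s ≠ 0 := norm_ne_zero_iff.1 (hs ▸ one_ne_zero)
  exact ⟨rescale s u η, a, s * u ^ 2 * B, hη.rescale hs0 hu, heq.rescale hs hεu hA, hred⟩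

/-- Proposition 3.4: reduction of the structure equations (3.3) in the case ν = 1. -/
theorem reduction_nu_one
    {g : Type*} [LieRing g] [LieAlgebra ℝ g]
    (h8 : Module.finrank ℝ g = 8) (hg : IsNilpotentLie g)
    (Jc : ComplexStructure g) (hw : Jc.IsWnN)
    (η : Fin 4 → (g →ₗ[ℝ] ℂ)) (ε δ : ℝ) (A B : ℂ)
    (hη : Is10Basis Jc η) (hε : ε = 0 ∨ ε = 1) (hδ : δ = 1 ∨ δ = -1)
    (heq : StarEq η ε δ 1 A B) :
    ∃ (ω : Fin 4 → (g →ₗ[ℝ] ℂ)) (a : ℝ) (B' : ℂ),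
      Is10Basis Jc ω ∧ StarEq ω ε δ 1 (a : ℂ) B' ∧
      ((a = 0 ∧ (B' = 0 ∨ B' = 1) ∧ ε = 0) ∨
       (a = 0 ∧ (∃ b : ℝ, 0 ≤ b ∧ B' = (b : ℂ)) ∧ ε = 1) ∨
       (a = 1 ∧ 0 ≤ B'.im ∧ ε = 0) ∨
       (0 < a ∧ ε = 1)) :=
  reduction_nu_one_general Jc η ε δ A B hη hε heq

end Paper
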